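/- For all i, j ∈ {1,…,4}, the vertical Ricci d-tensor S_{(1)(1)}^{(i)(j)} := Σ_{m=1}^{4} [ ∂C_{m(1)}^{i(j)}/∂p_m − ∂C_{m(1)}^{i(m)}/∂p_j ] + Σ_{m,r=1}^{4} [ C_{m(1)}^{r(j)} C_{r(1)}^{i(m)} − C_{m(1)}^{r(m)} C_{r(1)}^{i(j)} ] equals (1 − 4δ^{ij})/(8 p_i p_j); consequently R_{(1)(1)}^{(i)(j)} := −S_{(1)(1)}^{(i)(j)} = (4δ^{ij} − 1)/(8 p_i p_j). -/

import Mathlib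

/-!
Each `C_{m(1)}^{a(b)}` is a constant times the Laurent monomial `p_m / (p_a p_b)`, whose
derivative in `p_k` is `(δ_mk − δ_ak − δ_bk) / p_k` times the monomial itself. Hence every term
of `S_{(1)(1)}^{(i)(j)}`, derivative or quadratic, is a constant multiple of `1 / (p_i p_j)`, and
the theorem reduces to evaluating the numerical coefficient, a finite sum over the indices.
-/

/-- Partial derivative of `f : (Fin 4 → ℝ) → ℝ` with respect to the `i`-th coordinate. -/
noncomputable def pd (f : (Fin 4 → ℝ) → ℝ) (i : Fin 4) (v : Fin 4 → ℝ) : ℝ :=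
  deriv (fun s => f (Function.update v i s)) (v i)

/-- Kronecker delta. -/
noncomputable def kron (i j : Fin 4) : ℝ := if i = j then 1 else 0

/-- `𝖢_i^{jk} = (1 − 2δ^{jk} − 2δ^j_i − 2δ^k_i + 8δ^j_i δ^k_i)/8`. -/
noncomputable def CC (i j k : Fin 4) : ℝ :=
  (1 - 2 * kron j k - 2 * kron i j - 2 * kron i k + 8 * kron i j * kron i k) / 8

/-- The vertical d-tensor `C_{i(1)}^{j(k)} = 𝖢_i^{jk} p_i/(p_j p_k)`. -/
noncomputable def Cv (p : Fin 4 → ℝ) (i j k : Fin 4) : ℝ :=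
  CC i j k * p i / (p j * p k)

/-- The vertical Ricci d-tensor
`S_{(1)(1)}^{(i)(j)} = Σ_m [∂C_{m(1)}^{i(j)}/∂p_m − ∂C_{m(1)}^{i(m)}/∂p_j]
+ Σ_{m,r} [C_{m(1)}^{r(j)} C_{r(1)}^{i(m)} − C_{m(1)}^{r(m)} C_{r(1)}^{i(j)}]`. -/
noncomputable def Sv (p : Fin 4 → ℝ) (i j : Fin 4) : ℝ :=
  (∑ m, (pd (fun p' => Cv p' m i j) m p - pd (fun p' => Cv p' m i m) j p))
    + ∑ m, ∑ r, (Cv p m r j * Cv p r i m - Cv p m r m * Cv p r i j)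

open Function

section LaurentMonomial

variable {ι : Type*} [DecidableEq ι]

theorem hasDerivAt_update_apply (p : ι → ℝ) (k a : ι) :
    HasDerivAt (fun s => update p k s a) ((Pi.single k 1 : ι → ℝ) a) (p k) :=
  hasDerivAt_pi.1 (hasDerivAt_update p k (p k)) a

theorem hasDerivAt_update_div_mul {p : ι → ℝ} {b c k : ι} (hb : p b ≠ 0) (hc : p c ≠ 0)
    (hk : p k ≠ 0) (a : ι) :
    HasDerivAt (fun s => update p k s a / (update p k s b * update p k s c))
      (((Pi.single k 1 : ι → ℝ) a - (Pi.single k 1 : ι → ℝ) b - (Pi.single k 1 : ι → ℝ) c)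
        * (p a / (p b * p c)) / p k) (p k) := by
  have hden := (hasDerivAt_update_apply p k b).fun_mul (hasDerivAt_update_apply p k c)
  have h := (hasDerivAt_update_apply p k a).fun_div hden (by simp [hb, hc])
  simp only [update_eq_self] at h
  refine h.congr_deriv ?_
  have euler : ∀ x, (Pi.single k 1 : ι → ℝ) x * p x = (Pi.single k 1 : ι → ℝ) x * p k := by
    intro x
    by_cases hx : x = k <;> simp [hx]
  field_simp
  linear_combination (p a * p c) * euler b + (p a * p b) * euler c - (p b * p c) * euler a

end LaurentMonomial

theorem single_one_apply_eq_kron (k a : Fin 4) : (Pi.single k 1 : Fin 4 → ℝ) a = kron a k := by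
  simp [kron, Pi.single_apply]

theorem pd_Cv {p : Fin 4 → ℝ} (hp : ∀ a, p a ≠ 0) (m a b k : Fin 4) :
    pd (fun p' => Cv p' m a b) k p = (kron m k - kron a k - kron b k) * Cv p m a b / p k := by
  have h := ((hasDerivAt_update_div_mul (hp a) (hp b) (hp k) m).const_mul (CC m a b)).deriv
  simp only [single_one_apply_eq_kron] at h
  simp only [pd, Cv, mul_div_assoc, h]
  ring

noncomputable def SvCoeff (i j : Fin 4) : ℝ :=
  ∑ m, (CC m i j * (1 - kron i m - kron j m) + kron i j * CC m i m)
    + ∑ m, ∑ r, (CC m r j * CC r i m - CC m r m * CC r i j)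

theorem Sv_eq {p : Fin 4 → ℝ} (hp : ∀ a, p a ≠ 0) (i j : Fin 4) :
    Sv p i j = SvCoeff i j / (p i * p j) := by
  have hkron : ∀ a, kron a a = 1 := fun a => if_pos rfl
  rw [Sv, SvCoeff, add_div, Finset.sum_div, Finset.sum_div]
  congr 1
  · refine Finset.sum_congr rfl fun m _ => ?_
    rw [pd_Cv hp, pd_Cv hp, hkron]
    simp only [Cv]
    field_simp [hp m, hp i, hp j]
    ring
  · refine Finset.sum_congr rfl fun m _ => ?_
    rw [Finset.sum_div]
    refine Finset.sum_congr rfl fun r _ => ?_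
    simp only [Cv]
    field_simp [hp m, hp r, hp i, hp j]

theorem SvCoeff_eq (i j : Fin 4) : SvCoeff i j = (1 - 4 * kron i j) / 8 := by
  fin_cases i <;> fin_cases j <;>
    simp only [SvCoeff, CC, kron, Fin.sum_univ_four, Fin.isValue, Fin.reduceFinMk, Fin.reduceEq,
      reduceIte] <;> norm_num

/-- `S_{(1)(1)}^{(i)(j)} = (1 − 4δ^{ij})/(8 p_i p_j)`; consequently
`R_{(1)(1)}^{(i)(j)} = −S_{(1)(1)}^{(i)(j)} = (4δ^{ij} − 1)/(8 p_i p_j)`. -/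
theorem stmt_10 (p : Fin 4 → ℝ) (hp : ∀ i, 0 < p i) (i j : Fin 4) :
    Sv p i j = (1 - 4 * kron i j) / (8 * p i * p j)
    ∧ -Sv p i j = (4 * kron i j - 1) / (8 * p i * p j) := by
  have hS : Sv p i j = (1 - 4 * kron i j) / (8 * p i * p j) := by
    rw [Sv_eq (fun a => (hp a).ne'), SvCoeff_eq, div_div, mul_assoc]
  refine ⟨hS, ?_⟩
  rw [hS, ← neg_div]
  ring
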